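/- Let n ≥ 2 be an integer and r > 0 a real number, and for ν ∈ ℕ (including ν = 0) set λ̄_ν := ν(ν + n − 2)/r². Let (λ_j)_{j∈ℕ} be a nondecreasing sequence of real numbers such that {λ_j : j ∈ ℕ} = {λ̄_ν : ν ∈ ℕ} and such that each value λ̄_ν is attained by λ_j for only finitely many indices j. Then limsup_{j→∞} (λ_{j+1} − λ_j)/(λ_j)^{1/2} = 2/r. -/

import Mathlib

/-!
The distinct values `λ̄_ν` are strictly increasing, so a nondecreasing sequence `λ` with the
same set of values is `λ̄ ∘ φ` for a monotone surjection `φ : ℕ → ℕ`, which can only stay put or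
advance by one. Hence each quotient `(λ_{j+1} - λ_j)/√λ_j` is either `0` or the quotient
`(λ̄_{ν+1} - λ̄_ν)/√λ̄_ν` for `ν = φ j`, and since every fiber of `φ` is finite, each `ν` occurs
at the last index of its fiber. So the limsup is the limit of the quotients for `λ̄`, which is
`2/r` because `λ̄_{ν+1} - λ̄_ν = (2ν + n - 1)/r²` and `ν/r ≤ √λ̄_ν ≤ (2ν + n - 2)/(2r)`.
-/

open Filter Set Function Topology

section Reindex

theorem StrictMono.exists_monotone_surjective_comp_eq {ι κ α : Type*} [Preorder ι]
    [LinearOrder κ] [Preorder α] {a : κ → α} {b : ι → α} (ha : StrictMono a) (hb : Monotone b)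
    (hrange : range b = range a) : ∃ φ : ι → κ, Monotone φ ∧ Surjective φ ∧ b = a ∘ φ := by
  have hmem (j : ι) : b j ∈ range a := hrange ▸ mem_range_self j
  choose φ hφ using hmem
  refine ⟨φ, fun i j hij => ?_, fun m => ?_, funext fun j => (hφ j).symm⟩
  · rw [← ha.le_iff_le, hφ, hφ]
    exact hb hij
  · obtain ⟨j, hj⟩ : a m ∈ range b := hrange ▸ mem_range_self m
    exact ⟨j, ha.injective (by rw [hφ, hj])⟩

variable {φ : ℕ → ℕ}

theorem Monotone.map_succ_le_of_surjective (hφ : Monotone φ) (hsurj : Surjective φ) (j : ℕ) :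
    φ (j + 1) ≤ φ j + 1 := by
  by_contra! h
  obtain ⟨k, hk⟩ := hsurj (φ j + 1)
  rcases le_or_gt k j with hkj | hjk
  · have := hφ hkj
    omega
  · have : φ (j + 1) ≤ φ k := hφ hjk
    omega

theorem Monotone.exists_map_eq_and_map_succ_eq (hφ : Monotone φ) (hsurj : Surjective φ)
    (hfin : ∀ m, {j | φ j = m}.Finite) (m : ℕ) : ∃ j, φ j = m ∧ φ (j + 1) = m + 1 := by
  obtain ⟨j, hjm : φ j = m, hmax⟩ := exists_max_image _ id (hfin m) (hsurj m)
  refine ⟨j, hjm, ?_⟩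
  have hne : φ (j + 1) ≠ m := fun h => by simpa using hmax (j + 1) h
  have hge : m ≤ φ (j + 1) := hjm ▸ hφ j.le_succ
  have hle := hφ.map_succ_le_of_surjective hsurj j
  omega

end Reindex

section GapRatio

noncomputable def gapRatio (a : ℕ → ℝ) (j : ℕ) : ℝ :=
  (a (j + 1) - a j) / Real.sqrt (a j)

variable {a : ℕ → ℝ}

theorem gapRatio_nonneg (ha : Monotone a) (j : ℕ) : 0 ≤ gapRatio a j :=
  div_nonneg (sub_nonneg.mpr (ha j.le_succ)) (Real.sqrt_nonneg _)

theorem gapRatio_comp_of_map_succ {φ : ℕ → ℕ} {j : ℕ} (h : φ (j + 1) = φ j + 1) :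
    gapRatio (a ∘ φ) j = gapRatio a (φ j) := by
  simp only [gapRatio, comp_apply, h]

theorem gapRatio_comp_le (ha : Monotone a) {φ : ℕ → ℕ} (hφ : Monotone φ)
    (hsurj : Surjective φ) (j : ℕ) : gapRatio (a ∘ φ) j ≤ gapRatio a (φ j) := by
  rcases (hφ j.le_succ).eq_or_lt with h | h
  · simp only [gapRatio, comp_apply, ← h, sub_self, zero_div]
    exact gapRatio_nonneg ha _
  · exact (gapRatio_comp_of_map_succ
      (le_antisymm (hφ.map_succ_le_of_surjective hsurj j) h)).le

theorem limsup_gapRatio_eq_of_range_eq (ha : StrictMono a) {b : ℕ → ℝ} (hb : Monotone b)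
    (hrange : range b = range a) (hfin : ∀ m, {j | b j = a m}.Finite) {L : ℝ}
    (hL : Tendsto (gapRatio a) atTop (𝓝 L)) : limsup (gapRatio b) atTop = L := by
  obtain ⟨φ, hφ, hsurj, rfl⟩ := ha.exists_monotone_surjective_comp_eq hb hrange
  have hfib (m : ℕ) : {j | φ j = m}.Finite := by
    simpa only [comp_apply, ha.injective.eq_iff] using hfin m
  choose s hs using hφ.exists_map_eq_and_map_succ_eq hsurj hfib
  have hle := gapRatio_comp_le ha.monotone hφ hsurj
  have hφ_top : Tendsto φ atTop atTop :=
    tendsto_atTop_atTop_of_monotone hφ fun m => ⟨s m, (hs m).1.ge⟩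
  have hs_top : Tendsto s atTop atTop :=
    (strictMono_nat_of_lt_succ fun m => hφ.reflect_lt (by simp only [hs]; omega)).tendsto_atTop
  have hφL : Tendsto (gapRatio a ∘ φ) atTop (𝓝 L) := hL.comp hφ_top
  have hbdd : IsBoundedUnder (· ≤ ·) atTop (gapRatio (a ∘ φ)) :=
    hφL.isBoundedUnder_le.mono_le (.of_forall hle)
  have hcobdd {l : Filter ℕ} [l.NeBot] : IsCoboundedUnder (· ≤ ·) l (gapRatio (a ∘ φ)) :=
    isCoboundedUnder_le_of_le l (gapRatio_nonneg (ha.monotone.comp hφ))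
  have hsteps : gapRatio (a ∘ φ) ∘ s = gapRatio a :=
    funext fun m => by
      rw [comp_apply, gapRatio_comp_of_map_succ (by rw [(hs m).1, (hs m).2]), (hs m).1]
  apply le_antisymm
  · calc limsup (gapRatio (a ∘ φ)) atTop ≤ limsup (gapRatio a ∘ φ) atTop :=
          limsup_le_limsup (.of_forall hle) hcobdd hφL.isBoundedUnder_le
      _ = L := hφL.limsup_eq
  · calc L = limsup (gapRatio (a ∘ φ) ∘ s) atTop := by rw [hsteps, hL.limsup_eq]
      _ ≤ limsup (gapRatio (a ∘ φ)) atTop := hs_top.limsup_comp_le_limsup hcobdd hbdd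

end GapRatio

section SphereEigenvalue

noncomputable def sphereEigenvalue (n : ℕ) (r : ℝ) (ν : ℕ) : ℝ :=
  (ν : ℝ) * ((ν : ℝ) + (n : ℝ) - 2) / r ^ 2

variable {n : ℕ} {r : ℝ}

theorem sphereEigenvalue_succ_sub (n : ℕ) (r : ℝ) (ν : ℕ) :
    sphereEigenvalue n r (ν + 1) - sphereEigenvalue n r ν = (2 * ν + n - 1) / r ^ 2 := by
  simp only [sphereEigenvalue]
  push_cast
  ring

theorem sphereEigenvalue_strictMono (hn : 2 ≤ n) (hr : r ≠ 0) :
    StrictMono (sphereEigenvalue n r) := by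
  refine strictMono_nat_of_lt_succ fun ν => sub_pos.mp ?_
  rw [sphereEigenvalue_succ_sub]
  have : (2 : ℝ) ≤ n := by exact_mod_cast hn
  exact div_pos (by linarith [ν.cast_nonneg (α := ℝ)]) (by positivity)

theorem div_le_sqrt_sphereEigenvalue (hn : 2 ≤ n) (hr : 0 < r) (ν : ℕ) :
    ν / r ≤ Real.sqrt (sphereEigenvalue n r ν) := by
  have : (2 : ℝ) ≤ n := by exact_mod_cast hn
  have hν : (0 : ℝ) ≤ ν := ν.cast_nonneg
  rw [sphereEigenvalue, Real.le_sqrt (by positivity) (div_nonneg (by nlinarith) (sq_nonneg r)),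
    div_pow]
  gcongr
  nlinarith

theorem sqrt_sphereEigenvalue_le (hn : 2 ≤ n) (hr : 0 < r) (ν : ℕ) :
    Real.sqrt (sphereEigenvalue n r ν) ≤ (2 * ν + n - 2) / (2 * r) := by
  have : (2 : ℝ) ≤ n := by exact_mod_cast hn
  have hν : (0 : ℝ) ≤ ν := ν.cast_nonneg
  rw [Real.sqrt_le_left (div_nonneg (by linarith) (by positivity)), sphereEigenvalue, div_pow,
    mul_pow, div_le_div_iff₀ (by positivity) (by positivity)]
  nlinarith [sq_nonneg (((n : ℝ) - 2) * r)]

theorem two_div_le_gapRatio_sphereEigenvalue (hn : 2 ≤ n) (hr : 0 < r) {ν : ℕ} (hν : 1 ≤ ν) :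
    2 / r ≤ gapRatio (sphereEigenvalue n r) ν := by
  have hpos : 0 < Real.sqrt (sphereEigenvalue n r ν) :=
    (div_pos (by exact_mod_cast hν) hr).trans_le (div_le_sqrt_sphereEigenvalue hn hr ν)
  rw [gapRatio, le_div_iff₀ hpos, sphereEigenvalue_succ_sub]
  calc 2 / r * Real.sqrt (sphereEigenvalue n r ν) ≤ 2 / r * ((2 * ν + n - 2) / (2 * r)) := by
        gcongr
        exact sqrt_sphereEigenvalue_le hn hr ν
    _ = (2 * ν + n - 2) / r ^ 2 := by field_simp
    _ ≤ (2 * ν + n - 1) / r ^ 2 := by gcongr; linarith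

theorem gapRatio_sphereEigenvalue_le (hn : 2 ≤ n) (hr : 0 < r) {ν : ℕ} (hν : 1 ≤ ν) :
    gapRatio (sphereEigenvalue n r) ν ≤ 2 / r + (n - 1) / r * (1 / ν) := by
  have hν' : (0 : ℝ) < ν := by exact_mod_cast hν
  calc gapRatio (sphereEigenvalue n r) ν ≤ (2 * ν + n - 1) / r ^ 2 / (ν / r) := by
        rw [gapRatio, sphereEigenvalue_succ_sub]
        have : (2 : ℝ) ≤ n := by exact_mod_cast hn
        exact div_le_div_of_nonneg_left (div_nonneg (by linarith) (by positivity))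
          (by positivity) (div_le_sqrt_sphereEigenvalue hn hr ν)
    _ = 2 / r + (n - 1) / r * (1 / ν) := by field_simp; ring

theorem tendsto_gapRatio_sphereEigenvalue (hn : 2 ≤ n) (hr : 0 < r) :
    Tendsto (gapRatio (sphereEigenvalue n r)) atTop (𝓝 (2 / r)) := by
  have hupper : Tendsto (fun ν : ℕ => 2 / r + (n - 1) / r * (1 / (ν : ℝ))) atTop (𝓝 (2 / r)) := by
    simpa using (tendsto_one_div_atTop_nhds_zero_nat.const_mul ((n - 1 : ℝ) / r)).const_add (2 / r)
  refine tendsto_of_tendsto_of_tendsto_of_le_of_le' tendsto_const_nhds hupper ?_ ?_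
  · filter_upwards [eventually_ge_atTop 1] with ν hν
    exact two_div_le_gapRatio_sphereEigenvalue hn hr hν
  · filter_upwards [eventually_ge_atTop 1] with ν hν
    exact gapRatio_sphereEigenvalue_le hn hr hν

end SphereEigenvalue

/-- Let `n ≥ 2`, `r > 0`, and `λ̄_ν := ν(ν + n − 2)/r²` for `ν ∈ ℕ`
(including `ν = 0`).  If `(λ_j)` is a nondecreasing real sequence whose set of values is
exactly `{λ̄_ν : ν ∈ ℕ}` and which attains each value `λ̄_ν` only finitely many times, then
`limsup_{j→∞} (λ_{j+1} − λ_j)/(λ_j)^{1/2} = 2/r`. -/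
theorem statement10 (n : ℕ) (hn : 2 ≤ n) (r : ℝ) (hr : 0 < r)
    (lamb : ℕ → ℝ) (hlamb : ∀ ν : ℕ, lamb ν = (ν : ℝ) * ((ν : ℝ) + (n : ℝ) - 2) / r ^ 2)
    (lam : ℕ → ℝ) (hmono : Monotone lam)
    (hrange : Set.range lam = Set.range lamb)
    (hfin : ∀ ν : ℕ, {j : ℕ | lam j = lamb ν}.Finite) :
    limsup (fun j : ℕ => (lam (j + 1) - lam j) / Real.sqrt (lam j)) atTop = 2 / r := by
  obtain rfl : lamb = sphereEigenvalue n r := funext hlamb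
  exact limsup_gapRatio_eq_of_range_eq (sphereEigenvalue_strictMono hn hr.ne') hmono hrange hfin
    (tendsto_gapRatio_sphereEigenvalue hn hr)
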